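/- Adversarial interior-point reward-budget bound (Proposition 5.2, reward part): in a finite discounted MDP, let δ > 0, t > 0, ε_R ≥ 0, and let R : S → A → ℝ be a reward signal. Suppose a min-cost stage π_0, …, π_{n2} satisfies for every i < n2: (π_i s a = 0 → π_{i+1} s a = 0), D̄_KL(π_{i+1}‖π_i) ≤ δ, J_R(π_i) + (1/(1−γ)) · 𝔸_R(π_i, π_{i+1}) ≥ J_R(π_0), and ε_R(π_i, π_{i+1}) ≤ ε_R; and a subsequent max-reward stage σ_0 = π_{n2}, σ_1, …, σ_{n1} satisfies for every i < n1: (σ_i s a = 0 → σ_{i+1} s a = 0), D̄_KL(σ_{i+1}‖σ_i) ≤ δ, 𝔸_R(σ_i, σ_{i+1}) ≥ −1/t, and ε_R(σ_i, σ_{i+1}) ≤ ε_R. Then J_R(σ_{n1}) − J_R(π_0) ≥ − n1/((1−γ)·t) − (√(2δ) · γ / (1−γ)²) · (n1 + n2) · ε_R. -/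

import Mathlib

open Real BigOperators

/-- Induced transition matrix of policy `pol`: `P_pol(s,s') = ∑ a, pol s a * P s a s'`. -/
noncomputable def transMat {S A : Type*} [Fintype A] (P : S → A → S → ℝ)
    (pol : S → A → ℝ) : Matrix S S ℝ :=
  fun s s' => ∑ a, pol s a * P s a s'

/-- Discounted state visitation distribution
`d_pol(s) = (1-γ) ∑ₜ γ^t ∑_{s0} ρ0 s0 * (P_pol^t)(s0,s)`. -/
noncomputable def dVisit {S A : Type*} [Fintype S] [DecidableEq S] [Fintype A]
    (P : S → A → S → ℝ) (γ : ℝ) (ρ0 : S → ℝ) (pol : S → A → ℝ) (s : S) : ℝ :=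
  (1 - γ) * ∑' t : ℕ, γ ^ t * ∑ s0, ρ0 s0 * (transMat P pol ^ t) s0 s

/-- Value function of signal `F` under policy `pol`. -/
noncomputable def Vfun {S A : Type*} [Fintype S] [DecidableEq S] [Fintype A]
    (P : S → A → S → ℝ) (γ : ℝ) (F : S → A → ℝ) (pol : S → A → ℝ) (s : S) : ℝ :=
  ∑' t : ℕ, γ ^ t * ∑ s', (transMat P pol ^ t) s s' * ∑ a, pol s' a * F s' a

/-- Return `J_F(pol) = ∑ s, ρ0 s * V_F^pol(s)`. -/
noncomputable def Jret {S A : Type*} [Fintype S] [DecidableEq S] [Fintype A]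
    (P : S → A → S → ℝ) (γ : ℝ) (ρ0 : S → ℝ) (F : S → A → ℝ) (pol : S → A → ℝ) : ℝ :=
  ∑ s, ρ0 s * Vfun P γ F pol s

/-- Action-value function `Q_F^pol(s,a) = F s a + γ ∑_{s'} P s a s' * V_F^pol(s')`. -/
noncomputable def Qfun {S A : Type*} [Fintype S] [DecidableEq S] [Fintype A]
    (P : S → A → S → ℝ) (γ : ℝ) (F : S → A → ℝ) (pol : S → A → ℝ) (s : S) (a : A) : ℝ :=
  F s a + γ * ∑ s', P s a s' * Vfun P γ F pol s'

/-- Advantage function `A_F^pol(s,a) = Q_F^pol(s,a) - V_F^pol(s)`. -/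
noncomputable def Adv {S A : Type*} [Fintype S] [DecidableEq S] [Fintype A]
    (P : S → A → S → ℝ) (γ : ℝ) (F : S → A → ℝ) (pol : S → A → ℝ) (s : S) (a : A) : ℝ :=
  Qfun P γ F pol s a - Vfun P γ F pol s

/-- Expected surrogate advantage
`𝔸_F(pol,pol') = ∑ s, d_pol(s) ∑ a, pol' s a * A_F^pol(s,a)`. -/
noncomputable def surrAdv {S A : Type*} [Fintype S] [DecidableEq S] [Fintype A]
    (P : S → A → S → ℝ) (γ : ℝ) (ρ0 : S → ℝ) (F : S → A → ℝ)
    (pol pol' : S → A → ℝ) : ℝ :=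
  ∑ s, dVisit P γ ρ0 pol s * ∑ a, pol' s a * Adv P γ F pol s a

/-- `ε_F(pol,pol') = max_s |∑ a, pol' s a * A_F^pol(s,a)|`. -/
noncomputable def epsAdv {S A : Type*} [Fintype S] [DecidableEq S] [Fintype A] [Nonempty S]
    (P : S → A → S → ℝ) (γ : ℝ) (F : S → A → ℝ) (pol pol' : S → A → ℝ) : ℝ :=
  Finset.univ.sup' Finset.univ_nonempty fun s => |∑ a, pol' s a * Adv P γ F pol s a|

/-- Per-state KL divergence `KL(pol'‖pol)(s) = ∑ a, pol' s a * log (pol' s a / pol s a)`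
(with the convention `0 * log 0 = 0`, automatic since `Real.log 0 = 0`). -/
noncomputable def klState {S A : Type*} [Fintype A] (pol' pol : S → A → ℝ) (s : S) : ℝ :=
  ∑ a, pol' s a * Real.log (pol' s a / pol s a)

/-- Averaged KL divergence `D̄_KL(pol'‖pol) = ∑ s, d_pol(s) * KL(pol'‖pol)(s)`. -/
noncomputable def avgKL {S A : Type*} [Fintype S] [DecidableEq S] [Fintype A]
    (P : S → A → S → ℝ) (γ : ℝ) (ρ0 : S → ℝ) (pol' pol : S → A → ℝ) : ℝ :=
  ∑ s, dVisit P γ ρ0 pol s * klState pol' pol s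

/-!
Each trust-region step costs at most `√(2δ) γ ε / (1 - γ)²` against its surrogate. By the
performance-difference lemma, `(1 - γ) (J(π') - J(π)) = ∑ₛ d_{π'}(s) Ā(s)` with
`Ā(s) = ∑ₐ π'(s,a) A^π(s,a)`; replacing `d_{π'}` by `d_π` turns the right side into the surrogate
advantage, at a cost of at most `ε ‖d_{π'} - d_π‖₁`. The resolvent identity for the visitation
distributions gives `‖d_{π'} - d_π‖₁ ≤ γ / (1 - γ) · 𝔼_{d_π} ‖π' - π‖₁`, and Pinsker's inequality
followed by Jensen's bounds the expectation by `√(2 D̄_KL) ≤ √(2δ)`.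

Over the max-reward stage, where every surrogate is at least `-1/t`, each step therefore loses at
most `1/((1 - γ) t)` plus this cost. Of the min-cost stage only the last step is needed: its
surrogate hypothesis already compares with `J(π₀)`, so that stage loses a single such cost.
-/

open Matrix Finset

lemma summable_geometric_mul_of_abs_le {γ : ℝ} (hγ0 : 0 ≤ γ) (hγ1 : γ < 1) {f : ℕ → ℝ} {C : ℝ}
    (hf : ∀ t, |f t| ≤ C) : Summable fun t => γ ^ t * f t :=
  Summable.of_norm_bounded ((summable_geometric_of_lt_one hγ0 hγ1).mul_left C) fun t => by
    rw [Real.norm_eq_abs, abs_mul, abs_pow, abs_of_nonneg hγ0, mul_comm]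
    gcongr
    exact hf t

namespace Matrix

variable {m n : Type*} [Fintype m] [Fintype n]

lemma sum_abs_vecMul_le (x : m → ℝ) (N : Matrix m n ℝ) :
    ∑ j, |(x ᵥ* N) j| ≤ ∑ i, |x i| * ∑ j, |N i j| := by
  calc ∑ j, |(x ᵥ* N) j| ≤ ∑ j, ∑ i, |x i| * |N i j| :=
        sum_le_sum fun j _ => (abs_sum_le_sum_abs _ _).trans_eq (by simp only [abs_mul])
    _ = ∑ i, |x i| * ∑ j, |N i j| := by rw [sum_comm]; simp only [mul_sum]

variable [DecidableEq n] {M M' : Matrix n n ℝ} {γ : ℝ}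

lemma sum_abs_vecMul_le_of_mem_rowStochastic (hM : M ∈ rowStochastic ℝ n) (x : n → ℝ) :
    ∑ j, |(x ᵥ* M) j| ≤ ∑ i, |x i| := by
  refine (sum_abs_vecMul_le x M).trans_eq (sum_congr rfl fun i _ => ?_)
  simp only [abs_of_nonneg (hM.1 i _), sum_row_of_mem_rowStochastic hM, mul_one]

lemma abs_mulVec_le_of_mem_rowStochastic (hM : M ∈ rowStochastic ℝ n) (v : n → ℝ) (i : n) :
    |(M *ᵥ v) i| ≤ ∑ j, |v j| :=
  (abs_sum_le_sum_abs _ _).trans <| sum_le_sum fun j _ => by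
    rw [abs_mul, abs_of_nonneg (hM.1 i j)]
    exact mul_le_of_le_one_left (abs_nonneg _) (le_one_of_mem_rowStochastic hM)

noncomputable def discountedMulVec (γ : ℝ) (M : Matrix n n ℝ) (v : n → ℝ) : n → ℝ :=
  fun i => ∑' t : ℕ, γ ^ t * (M ^ t *ᵥ v) i

noncomputable def discountedVecMul (γ : ℝ) (w : n → ℝ) (M : Matrix n n ℝ) : n → ℝ :=
  fun j => ∑' t : ℕ, γ ^ t * (w ᵥ* M ^ t) j

lemma summable_discountedMulVec (hM : M ∈ rowStochastic ℝ n) (hγ0 : 0 ≤ γ) (hγ1 : γ < 1)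
    (v : n → ℝ) (i : n) :
    Summable fun t : ℕ => γ ^ t * (M ^ t *ᵥ v) i :=
  summable_geometric_mul_of_abs_le hγ0 hγ1 fun t =>
    abs_mulVec_le_of_mem_rowStochastic (pow_mem hM t) v i

lemma summable_discountedVecMul (hM : M ∈ rowStochastic ℝ n) (hγ0 : 0 ≤ γ) (hγ1 : γ < 1)
    (w : n → ℝ) (j : n) :
    Summable fun t : ℕ => γ ^ t * (w ᵥ* M ^ t) j :=
  summable_geometric_mul_of_abs_le hγ0 hγ1 fun t =>
    (single_le_sum (f := fun j => |(w ᵥ* M ^ t) j|) (fun _ _ => abs_nonneg _) (mem_univ j)).trans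
      (sum_abs_vecMul_le_of_mem_rowStochastic (pow_mem hM t) w)

lemma discountedMulVec_eq_add (hM : M ∈ rowStochastic ℝ n) (hγ0 : 0 ≤ γ) (hγ1 : γ < 1)
    (v : n → ℝ) :
    discountedMulVec γ M v = v + γ • M *ᵥ discountedMulVec γ M v := by
  ext i
  have hsum := summable_discountedMulVec hM hγ0 hγ1 v
  have hshift (t : ℕ) : γ ^ (t + 1) * (M ^ (t + 1) *ᵥ v) i
      = γ * ∑ j, M i j * (γ ^ t * (M ^ t *ᵥ v) j) := by
    rw [pow_succ', pow_succ', ← mulVec_mulVec, mulVec, dotProduct]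
    simp only [mul_sum]
    exact sum_congr rfl fun j _ => by ring
  rw [discountedMulVec, (hsum i).tsum_eq_zero_add, tsum_congr hshift, tsum_mul_left,
    Summable.tsum_finsetSum fun j _ => (hsum j).mul_left _]
  simp only [pow_zero, one_mulVec, one_mul]
  simp [mulVec, dotProduct, discountedMulVec, tsum_mul_left]

lemma discountedVecMul_eq_add (hM : M ∈ rowStochastic ℝ n) (hγ0 : 0 ≤ γ) (hγ1 : γ < 1)
    (w : n → ℝ) :
    discountedVecMul γ w M = w + γ • discountedVecMul γ w M ᵥ* M := by
  ext j
  have hsum := summable_discountedVecMul hM hγ0 hγ1 w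
  have hshift (t : ℕ) : γ ^ (t + 1) * (w ᵥ* M ^ (t + 1)) j
      = γ * ∑ i, (γ ^ t * (w ᵥ* M ^ t) i) * M i j := by
    rw [pow_succ', pow_succ, ← vecMul_vecMul, vecMul, dotProduct]
    simp only [mul_sum]
    exact sum_congr rfl fun i _ => by ring
  rw [discountedVecMul, (hsum j).tsum_eq_zero_add, tsum_congr hshift, tsum_mul_left,
    Summable.tsum_finsetSum fun i _ => (hsum i).mul_right _]
  simp only [pow_zero, vecMul_one, one_mul]
  simp [vecMul, dotProduct, discountedVecMul, tsum_mul_right]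

lemma discountedVecMul_dotProduct (hM : M ∈ rowStochastic ℝ n) (hγ0 : 0 ≤ γ) (hγ1 : γ < 1)
    (w v : n → ℝ) :
    discountedVecMul γ w M ⬝ᵥ v = w ⬝ᵥ discountedMulVec γ M v := by
  have hterm (t : ℕ) : ∑ j, γ ^ t * (w ᵥ* M ^ t) j * v j = ∑ i, w i * (γ ^ t * (M ^ t *ᵥ v) i) := by
    simp only [mul_assoc, mul_left_comm (w _), ← mul_sum]
    exact congrArg _ (dotProduct_mulVec w (M ^ t) v).symm
  simp only [dotProduct, discountedVecMul, discountedMulVec, ← tsum_mul_right, ← tsum_mul_left]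
  rw [← Summable.tsum_finsetSum fun j _ => (summable_discountedVecMul hM hγ0 hγ1 w j).mul_right _,
    ← Summable.tsum_finsetSum fun i _ => (summable_discountedMulVec hM hγ0 hγ1 v i).mul_left _]
  exact tsum_congr hterm

lemma discountedMulVec_one (hM : M ∈ rowStochastic ℝ n) (hγ0 : 0 ≤ γ) (hγ1 : γ < 1) :
    discountedMulVec γ M 1 = fun _ => (1 - γ)⁻¹ := by
  ext i
  simp [discountedMulVec, one_vecMul_of_mem_rowStochastic (pow_mem hM _),
    tsum_geometric_of_lt_one hγ0 hγ1]

lemma sum_discountedVecMul (hM : M ∈ rowStochastic ℝ n) (hγ0 : 0 ≤ γ) (hγ1 : γ < 1)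
    (w : n → ℝ) : ∑ j, discountedVecMul γ w M j = (∑ i, w i) / (1 - γ) := by
  have h := discountedVecMul_dotProduct hM hγ0 hγ1 w 1
  rw [discountedMulVec_one hM hγ0 hγ1] at h
  simpa [dotProduct, ← sum_mul, div_eq_mul_inv] using h

lemma discountedVecMul_nonneg (hM : M ∈ rowStochastic ℝ n) (hγ0 : 0 ≤ γ) {w : n → ℝ}
    (hw : ∀ i, 0 ≤ w i) (j : n) : 0 ≤ discountedVecMul γ w M j :=
  tsum_nonneg fun t =>
    mul_nonneg (pow_nonneg hγ0 t) (nonneg_vecMul_of_mem_rowStochastic (pow_mem hM t) hw j)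

lemma sum_abs_discountedVecMul_sub_le (hM : M ∈ rowStochastic ℝ n)
    (hM' : M' ∈ rowStochastic ℝ n) (hγ0 : 0 ≤ γ) (hγ1 : γ < 1) (w : n → ℝ) :
    ∑ j, |discountedVecMul γ w M' j - discountedVecMul γ w M j|
      ≤ γ / (1 - γ) * ∑ i, |discountedVecMul γ w M i| * ∑ j, |M' i j - M i j| := by
  have hY := discountedVecMul_eq_add hM hγ0 hγ1 w
  have hY' := discountedVecMul_eq_add hM' hγ0 hγ1 w
  set Y := discountedVecMul γ w M
  set Y' := discountedVecMul γ w M'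
  have hdiff : Y' - Y = γ • ((Y' - Y) ᵥ* M' + Y ᵥ* (M' - M)) := by
    calc Y' - Y = (w + γ • Y' ᵥ* M') - (w + γ • Y ᵥ* M) := by rw [← hY, ← hY']
      _ = _ := by
        simp only [sub_vecMul, vecMul_sub, smul_add, smul_sub]
        abel
  have hpt (j : n) : Y' j - Y j = γ * (((Y' - Y) ᵥ* M') j + (Y ᵥ* (M' - M)) j) :=
    congrFun hdiff j
  have hrec : ∑ j, |Y' j - Y j|
      ≤ γ * (∑ j, |Y' j - Y j| + ∑ i, |Y i| * ∑ j, |M' i j - M i j|) := by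
    calc ∑ j, |Y' j - Y j| = γ * ∑ j, |((Y' - Y) ᵥ* M') j + (Y ᵥ* (M' - M)) j| := by
          simp only [hpt, abs_mul, abs_of_nonneg hγ0, ← mul_sum]
      _ ≤ γ * (∑ j, |((Y' - Y) ᵥ* M') j| + ∑ j, |(Y ᵥ* (M' - M)) j|) := by
          rw [← sum_add_distrib]
          gcongr
          exact abs_add_le _ _
      _ ≤ _ := mul_le_mul_of_nonneg_left (add_le_add
          (sum_abs_vecMul_le_of_mem_rowStochastic hM' _) (sum_abs_vecMul_le _ _)) hγ0
  rw [div_mul_eq_mul_div, le_div_iff₀ (by linarith)]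
  linarith

end Matrix

section Pinsker

open InformationTheory

lemma hasDerivAt_log_sub_mul_div {y : ℝ} (hy : 0 < y) :
    HasDerivAt (fun y => log y - (y - 1) * (5 * y + 1) / (2 * y * (y + 2)))
      ((y - 1) ^ 3 / (y ^ 2 * (y + 2) ^ 2)) y := by
  have hnum : HasDerivAt (fun y : ℝ => (y - 1) * (5 * y + 1)) (10 * y - 4) y :=
    (((hasDerivAt_id' y).sub_const 1).mul
      (((hasDerivAt_id' y).const_mul 5).add_const 1)).congr_deriv (by ring)
  have hden : HasDerivAt (fun y : ℝ => 2 * y * (y + 2)) (4 * y + 4) y :=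
    (((hasDerivAt_id' y).const_mul 2).mul ((hasDerivAt_id' y).add_const 2)).congr_deriv
      (by ring)
  refine ((Real.hasDerivAt_log hy.ne').sub (hnum.div hden (by positivity))).congr_deriv ?_
  field_simp
  ring

lemma sub_one_mul_div_le_log {x : ℝ} (hx : 0 < x) :
    (x - 1) * (5 * x + 1) / (2 * x * (x + 2)) ≤ log x := by
  set h := fun y : ℝ => log y - (y - 1) * (5 * y + 1) / (2 * y * (y + 2))
  have hcont (D : Set ℝ) (hD : D ⊆ Set.Ioi 0) : ContinuousOn h D := fun y hy =>
    (hasDerivAt_log_sub_mul_div (hD hy)).continuousAt.continuousWithinAt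
  have hderiv (D : Set ℝ) (hD : D ⊆ Set.Ioi 0) (y : ℝ) (hy : y ∈ interior D) :
      HasDerivWithinAt h ((y - 1) ^ 3 / (y ^ 2 * (y + 2) ^ 2)) (interior D) y :=
    (hasDerivAt_log_sub_mul_div (hD (interior_subset hy))).hasDerivWithinAt
  suffices h 1 ≤ h x by simpa [h] using this
  rcases le_total 1 x with h1x | hx1
  · have hsub : Set.Ici (1 : ℝ) ⊆ Set.Ioi 0 := fun y hy => Set.mem_Ioi.2 (zero_lt_one.trans_le hy)
    refine monotoneOn_of_hasDerivWithinAt_nonneg (convex_Ici 1) (hcont _ hsub) (hderiv _ hsub)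
      (fun y hy => ?_) Set.self_mem_Ici h1x h1x
    rw [interior_Ici] at hy
    have : 0 ≤ y - 1 := by linarith [Set.mem_Ioi.1 hy]
    positivity
  · have hsub : Set.Ioc (0 : ℝ) 1 ⊆ Set.Ioi 0 := fun y hy => hy.1
    refine antitoneOn_of_hasDerivWithinAt_nonpos (convex_Ioc 0 1) (hcont _ hsub) (hderiv _ hsub)
      (fun y hy => ?_) ⟨hx, hx1⟩ ⟨zero_lt_one, le_rfl⟩ hx1
    rw [interior_Ioc] at hy
    exact div_nonpos_of_nonpos_of_nonneg (Odd.pow_nonpos (by decide) (by linarith [hy.2]))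
      (by positivity)

lemma three_mul_sq_div_le_klFun {x : ℝ} (hx : 0 ≤ x) :
    3 * (x - 1) ^ 2 / (2 * (x + 2)) ≤ klFun x := by
  rcases hx.eq_or_lt with rfl | hx
  · norm_num [klFun_zero]
  have hlog := mul_le_mul_of_nonneg_left (sub_one_mul_div_le_log hx) hx.le
  have hid : x * ((x - 1) * (5 * x + 1) / (2 * x * (x + 2))) + 1 - x
      = 3 * (x - 1) ^ 2 / (2 * (x + 2)) := by
    field_simp
    ring
  rw [klFun_apply]
  linarith

lemma three_mul_sq_div_le_mul_log_div {p q : ℝ} (hp : 0 ≤ p) (hq : 0 ≤ q) (hpq : q = 0 → p = 0) :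
    3 * (p - q) ^ 2 / (2 * (p + 2 * q)) ≤ p * log (p / q) + q - p := by
  rcases hq.eq_or_lt with rfl | hq
  · simp [hpq rfl]
  have hscale : q * klFun (p / q) = p * log (p / q) + q - p := by
    rw [klFun_apply]
    field_simp
  have hlhs : q * (3 * (p / q - 1) ^ 2 / (2 * (p / q + 2)))
      = 3 * (p - q) ^ 2 / (2 * (p + 2 * q)) := by
    field_simp
  rw [← hscale, ← hlhs]
  exact mul_le_mul_of_nonneg_left (three_mul_sq_div_le_klFun (by positivity)) hq.le

variable {ι : Type*} [Fintype ι] {p q : ι → ℝ}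

lemma sum_three_mul_sq_div_le_sum_mul_log_div (hp : p ∈ stdSimplex ℝ ι) (hq : q ∈ stdSimplex ℝ ι)
    (hpq : ∀ i, q i = 0 → p i = 0) :
    ∑ i, 3 * (p i - q i) ^ 2 / (2 * (p i + 2 * q i)) ≤ ∑ i, p i * log (p i / q i) := by
  have h := sum_le_sum fun i (_ : i ∈ univ) =>
    three_mul_sq_div_le_mul_log_div (hp.1 i) (hq.1 i) (hpq i)
  rwa [sum_sub_distrib, sum_add_distrib, hp.2, hq.2, add_sub_cancel_right] at h

lemma sum_mul_log_div_nonneg (hp : p ∈ stdSimplex ℝ ι) (hq : q ∈ stdSimplex ℝ ι)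
    (hpq : ∀ i, q i = 0 → p i = 0) : 0 ≤ ∑ i, p i * log (p i / q i) :=
  (sum_nonneg fun i _ => by have := hp.1 i; have := hq.1 i; positivity).trans
    (sum_three_mul_sq_div_le_sum_mul_log_div hp hq hpq)

/-- Pinsker's inequality, via Cauchy–Schwarz with weights `(p + 2q) / 3`. -/
lemma sum_abs_sub_le_sqrt_two_mul_sum_mul_log_div (hp : p ∈ stdSimplex ℝ ι)
    (hq : q ∈ stdSimplex ℝ ι) (hpq : ∀ i, q i = 0 → p i = 0) :
    ∑ i, |p i - q i| ≤ √(2 * ∑ i, p i * log (p i / q i)) := by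
  have hcs : (∑ i, |p i - q i|) ^ 2
      ≤ (∑ i, (p i + 2 * q i) / 3) * ∑ i, 2 * (3 * (p i - q i) ^ 2 / (2 * (p i + 2 * q i))) := by
    refine sum_sq_le_sum_mul_sum_of_sq_le_mul _ (fun i _ => ?_) (fun i _ => ?_) fun i _ => ?_
    · have := hp.1 i; have := hq.1 i; positivity
    · have := hp.1 i; have := hq.1 i; positivity
    · have := hp.1 i; have := hq.1 i
      rcases (show 0 ≤ p i + 2 * q i by positivity).eq_or_lt with h0 | h0
      · obtain ⟨hp0, hq0⟩ : p i = 0 ∧ q i = 0 := by constructor <;> linarith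
        simp [hp0, hq0]
      · rw [sq_abs]
        apply le_of_eq
        field_simp
        exact (mul_div_cancel_right₀ _ (by linarith : 0 < p i + q i * 2).ne').symm
  have hweights : ∑ i, (p i + 2 * q i) / 3 = 1 := by
    rw [← sum_div, sum_add_distrib, ← mul_sum, hp.2, hq.2]
    norm_num
  rw [hweights, one_mul, ← mul_sum] at hcs
  exact Real.le_sqrt_of_sq_le (hcs.trans (mul_le_mul_of_nonneg_left
    (sum_three_mul_sq_div_le_sum_mul_log_div hp hq hpq) zero_le_two))

end Pinsker

section MDP

variable {S A : Type*} [Fintype S] [Fintype A] {P : S → A → S → ℝ} {γ : ℝ}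
  {ρ0 : S → ℝ} {F : S → A → ℝ} {pol pol' : S → A → ℝ}

lemma transMat_mem_rowStochastic [DecidableEq S] (hP : ∀ s a, P s a ∈ stdSimplex ℝ S)
    (hpol : ∀ s, pol s ∈ stdSimplex ℝ A) : transMat P pol ∈ rowStochastic ℝ S := by
  refine mem_rowStochastic_iff_sum.2 ⟨fun s s' => ?_, fun s => ?_⟩
  · exact sum_nonneg fun a _ => mul_nonneg ((hpol s).1 a) ((hP s a).1 s')
  · simp only [transMat]
    rw [sum_comm]
    simp only [← mul_sum, (hP s _).2, mul_one, (hpol s).2]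

lemma sum_abs_transMat_sub_le (hP : ∀ s a, P s a ∈ stdSimplex ℝ S) (s : S) :
    ∑ s', |transMat P pol' s s' - transMat P pol s s'| ≤ ∑ a, |pol' s a - pol s a| := by
  have hrow (s' : S) :
      transMat P pol' s s' - transMat P pol s s' = ((pol' s - pol s) ᵥ* P s) s' := by
    simp only [transMat, vecMul, dotProduct, Pi.sub_apply, sub_mul, sum_sub_distrib]
  simp only [hrow]
  refine (sum_abs_vecMul_le _ _).trans_eq (sum_congr rfl fun a _ => ?_)
  simp only [Pi.sub_apply, abs_of_nonneg ((hP s a).1 _), (hP s a).2, mul_one]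

variable [DecidableEq S]

lemma Vfun_eq_discountedMulVec :
    Vfun P γ F pol = discountedMulVec γ (transMat P pol) fun s => ∑ a, pol s a * F s a :=
  rfl

lemma dVisit_eq_smul_discountedVecMul :
    dVisit P γ ρ0 pol = (1 - γ) • discountedVecMul γ ρ0 (transMat P pol) :=
  rfl

lemma Jret_eq_dotProduct : Jret P γ ρ0 F pol = ρ0 ⬝ᵥ Vfun P γ F pol :=
  rfl

lemma dVisit_mem_stdSimplex (hP : ∀ s a, P s a ∈ stdSimplex ℝ S) (hρ : ρ0 ∈ stdSimplex ℝ S)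
    (hγ0 : 0 ≤ γ) (hγ1 : γ < 1) (hpol : ∀ s, pol s ∈ stdSimplex ℝ A) :
    dVisit P γ ρ0 pol ∈ stdSimplex ℝ S := by
  have hM := transMat_mem_rowStochastic hP hpol
  rw [dVisit_eq_smul_discountedVecMul]
  refine ⟨fun s => mul_nonneg (by linarith) (discountedVecMul_nonneg hM hγ0 hρ.1 s), ?_⟩
  simp only [Pi.smul_apply, smul_eq_mul, ← mul_sum, sum_discountedVecMul hM hγ0 hγ1, hρ.2]
  field_simp [(by linarith : 1 - γ ≠ 0)]

lemma sum_mul_Adv_eq (hpol' : ∀ s, ∑ a, pol' s a = 1) (s : S) :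
    ∑ a, pol' s a * Adv P γ F pol s a
      = ∑ a, pol' s a * F s a + γ * (transMat P pol' *ᵥ Vfun P γ F pol) s
        - Vfun P γ F pol s := by
  have hmid : ∑ a, pol' s a * ∑ s', P s a s' * Vfun P γ F pol s'
      = (transMat P pol' *ᵥ Vfun P γ F pol) s := by
    simp only [mulVec, dotProduct, transMat, mul_sum, sum_mul]
    rw [sum_comm]
    exact sum_congr rfl fun _ _ => sum_congr rfl fun _ _ => by ring
  simp only [Adv, Qfun, mul_sub, mul_add, sum_sub_distrib, sum_add_distrib, ← sum_mul, hpol',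
    one_mul, mul_left_comm _ γ, ← mul_sum, hmid]

/-- The performance difference lemma. -/
lemma sum_dVisit_mul_sum_mul_Adv (hP : ∀ s a, P s a ∈ stdSimplex ℝ S) (hγ0 : 0 ≤ γ)
    (hγ1 : γ < 1) (hpol' : ∀ s, pol' s ∈ stdSimplex ℝ A) :
    ∑ s, dVisit P γ ρ0 pol' s * ∑ a, pol' s a * Adv P γ F pol s a
      = (1 - γ) * (Jret P γ ρ0 F pol' - Jret P γ ρ0 F pol) := by
  have hM' := transMat_mem_rowStochastic hP hpol'
  have hY'eq := discountedVecMul_eq_add hM' hγ0 hγ1 ρ0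
  set V := Vfun P γ F pol
  set Y' := discountedVecMul γ ρ0 (transMat P pol')
  have hY' : Y' ⬝ᵥ V = ρ0 ⬝ᵥ V + γ * ((Y' ᵥ* transMat P pol') ⬝ᵥ V) := by
    conv_lhs => rw [hY'eq]
    rw [add_dotProduct, smul_dotProduct, smul_eq_mul]
  have hbar : (fun s => ∑ a, pol' s a * Adv P γ F pol s a)
      = (fun s => ∑ a, pol' s a * F s a) + γ • transMat P pol' *ᵥ V - V :=
    funext (sum_mul_Adv_eq fun s => (hpol' s).2)
  change dVisit P γ ρ0 pol' ⬝ᵥ (fun s => ∑ a, pol' s a * Adv P γ F pol s a) = _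
  rw [hbar, dVisit_eq_smul_discountedVecMul, smul_dotProduct, dotProduct_sub, dotProduct_add,
    dotProduct_smul, dotProduct_mulVec, discountedVecMul_dotProduct hM' hγ0 hγ1, hY']
  rw [Jret_eq_dotProduct, Jret_eq_dotProduct, Vfun_eq_discountedMulVec (pol := pol'), smul_eq_mul]
  ring

lemma sum_abs_dVisit_sub_le (hP : ∀ s a, P s a ∈ stdSimplex ℝ S) (hρ : ρ0 ∈ stdSimplex ℝ S)
    (hγ0 : 0 ≤ γ) (hγ1 : γ < 1) (hpol : ∀ s, pol s ∈ stdSimplex ℝ A)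
    (hpol' : ∀ s, pol' s ∈ stdSimplex ℝ A) :
    ∑ s, |dVisit P γ ρ0 pol' s - dVisit P γ ρ0 pol s|
      ≤ γ / (1 - γ) * ∑ s, dVisit P γ ρ0 pol s * ∑ a, |pol' s a - pol s a| := by
  have hM := transMat_mem_rowStochastic hP hpol
  have hY := discountedVecMul_nonneg hM hγ0 hρ.1
  have h1γ : 0 ≤ 1 - γ := by linarith
  have h := sum_abs_discountedVecMul_sub_le hM (transMat_mem_rowStochastic hP hpol') hγ0 hγ1 ρ0
  simp only [abs_of_nonneg (hY _)] at h
  simp only [dVisit_eq_smul_discountedVecMul, Pi.smul_apply, smul_eq_mul, ← mul_sub, abs_mul,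
    abs_of_nonneg h1γ, ← mul_sum, mul_assoc]
  rw [mul_left_comm]
  refine mul_le_mul_of_nonneg_left (h.trans (mul_le_mul_of_nonneg_left
    (sum_le_sum fun s _ => ?_) (div_nonneg hγ0 h1γ))) h1γ
  exact mul_le_mul_of_nonneg_left (sum_abs_transMat_sub_le hP s) (hY s)

lemma sum_dVisit_mul_sum_abs_sub_le (hP : ∀ s a, P s a ∈ stdSimplex ℝ S)
    (hρ : ρ0 ∈ stdSimplex ℝ S) (hγ0 : 0 ≤ γ) (hγ1 : γ < 1)
    (hpol : ∀ s, pol s ∈ stdSimplex ℝ A) (hpol' : ∀ s, pol' s ∈ stdSimplex ℝ A)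
    (habs : ∀ s a, pol s a = 0 → pol' s a = 0) :
    ∑ s, dVisit P γ ρ0 pol s * ∑ a, |pol' s a - pol s a| ≤ √(2 * avgKL P γ ρ0 pol' pol) := by
  have hd := dVisit_mem_stdSimplex hP hρ hγ0 hγ1 hpol
  have hkl (s : S) : 0 ≤ 2 * klState pol' pol s :=
    mul_nonneg zero_le_two (sum_mul_log_div_nonneg (hpol' s) (hpol s) (habs s))
  calc ∑ s, dVisit P γ ρ0 pol s * ∑ a, |pol' s a - pol s a|
      ≤ ∑ s, dVisit P γ ρ0 pol s * √(2 * klState pol' pol s) :=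
        sum_le_sum fun s _ => mul_le_mul_of_nonneg_left
          (sum_abs_sub_le_sqrt_two_mul_sum_mul_log_div (hpol' s) (hpol s) (habs s)) (hd.1 s)
    _ ≤ √(∑ s, dVisit P γ ρ0 pol s * (2 * klState pol' pol s)) :=
        Real.strictConcaveOn_sqrt.concaveOn.le_map_sum (fun s _ => hd.1 s) hd.2 fun s _ => hkl s
    _ = √(2 * avgKL P γ ρ0 pol' pol) := by
        rw [avgKL, mul_sum]
        exact congrArg _ (sum_congr rfl fun s _ => by ring)

lemma Jret_add_surrAdv_sub_le [Nonempty S] (hP : ∀ s a, P s a ∈ stdSimplex ℝ S)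
    (hρ : ρ0 ∈ stdSimplex ℝ S) (hγ0 : 0 ≤ γ) (hγ1 : γ < 1)
    (hpol : ∀ s, pol s ∈ stdSimplex ℝ A) (hpol' : ∀ s, pol' s ∈ stdSimplex ℝ A)
    (habs : ∀ s a, pol s a = 0 → pol' s a = 0) {δ ε : ℝ} (hKL : avgKL P γ ρ0 pol' pol ≤ δ)
    (heps : epsAdv P γ F pol pol' ≤ ε) :
    Jret P γ ρ0 F pol + 1 / (1 - γ) * surrAdv P γ ρ0 F pol pol' - √(2 * δ) * γ / (1 - γ) ^ 2 * ε
      ≤ Jret P γ ρ0 F pol' := by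
  have h1γ : 0 < 1 - γ := by linarith
  set d := dVisit P γ ρ0 pol
  set d' := dVisit P γ ρ0 pol'
  set Abar : S → ℝ := fun s => ∑ a, pol' s a * Adv P γ F pol s a
  have hpd : ∑ s, d' s * Abar s = (1 - γ) * (Jret P γ ρ0 F pol' - Jret P γ ρ0 F pol) :=
    sum_dVisit_mul_sum_mul_Adv hP hγ0 hγ1 hpol'
  have hsplit : ∑ s, d' s * Abar s = surrAdv P γ ρ0 F pol pol' + ∑ s, (d' s - d s) * Abar s := by
    rw [surrAdv, ← sum_add_distrib]
    exact sum_congr rfl fun _ _ => by ring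
  have hAbar (s : S) : |Abar s| ≤ ε := (le_sup' (fun s => |Abar s|) (mem_univ s)).trans heps
  have hε : 0 ≤ ε := (abs_nonneg _).trans (hAbar (Classical.arbitrary S))
  have hdist : ∑ s, |d' s - d s| ≤ γ / (1 - γ) * √(2 * δ) :=
    (sum_abs_dVisit_sub_le hP hρ hγ0 hγ1 hpol hpol').trans <|
      mul_le_mul_of_nonneg_left ((sum_dVisit_mul_sum_abs_sub_le hP hρ hγ0 hγ1 hpol hpol' habs).trans
        (Real.sqrt_le_sqrt (by linarith))) (div_nonneg hγ0 h1γ.le)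
  have herr : |∑ s, (d' s - d s) * Abar s| ≤ ε * (γ / (1 - γ) * √(2 * δ)) :=
    calc |∑ s, (d' s - d s) * Abar s| ≤ ∑ s, |d' s - d s| * ε :=
          (abs_sum_le_sum_abs _ _).trans (sum_le_sum fun s _ => by
            rw [abs_mul]; exact mul_le_mul_of_nonneg_left (hAbar s) (abs_nonneg _))
      _ ≤ ε * (γ / (1 - γ) * √(2 * δ)) := by
          rw [← sum_mul, mul_comm]; exact mul_le_mul_of_nonneg_left hdist hε
  have hgap : Jret P γ ρ0 F pol' - (Jret P γ ρ0 F pol + 1 / (1 - γ) * surrAdv P γ ρ0 F pol pol'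
      - √(2 * δ) * γ / (1 - γ) ^ 2 * ε)
      = ((1 - γ) * (Jret P γ ρ0 F pol' - Jret P γ ρ0 F pol) - surrAdv P γ ρ0 F pol pol'
        + ε * (γ / (1 - γ) * √(2 * δ))) / (1 - γ) := by
    field_simp
    ring
  rw [← sub_nonneg, hgap]
  exact div_nonneg (by linarith [neg_abs_le (∑ s, (d' s - d s) * Abar s)]) h1γ.le

end MDP

lemma le_add_mul_of_le_succ_add {f : ℕ → ℝ} {c : ℝ} {n : ℕ} (h : ∀ i < n, f i ≤ f (i + 1) + c) :
    f 0 ≤ f n + n * c := by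
  induction n with
  | zero => simp
  | succ k ih =>
    have h0k := ih fun i hi => h i (by omega)
    have hk := h k (by omega)
    push_cast
    linarith

theorem adversarial_interior_point_reward_bound_general {S A : Type*} [Fintype S] [DecidableEq S] [Fintype A] [Nonempty S]
    (P : S → A → S → ℝ) (hP0 : ∀ s a s', 0 ≤ P s a s') (hP1 : ∀ s a, ∑ s', P s a s' = 1)
    (γ : ℝ) (hγ0 : 0 < γ) (hγ1 : γ < 1)
    (ρ0 : S → ℝ) (hρ0 : ∀ s, 0 ≤ ρ0 s) (hρ1 : ∑ s, ρ0 s = 1)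
    (δ : ℝ) (t : ℝ) (εR : ℝ) (hεR : 0 ≤ εR) (R : S → A → ℝ)
    (n1 n2 : ℕ) (pol σ : ℕ → S → A → ℝ)
    (hpol0 : ∀ i ≤ n2, ∀ s a, 0 ≤ pol i s a)
    (hpol1 : ∀ i ≤ n2, ∀ s, ∑ a, pol i s a = 1)
    (hpabs : ∀ i < n2, ∀ s a, pol i s a = 0 → pol (i + 1) s a = 0)
    (hpKL : ∀ i < n2, avgKL P γ ρ0 (pol (i + 1)) (pol i) ≤ δ)
    (hpsurr : ∀ i < n2,
      Jret P γ ρ0 R (pol 0) ≤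
        Jret P γ ρ0 R (pol i) + (1 / (1 - γ)) * surrAdv P γ ρ0 R (pol i) (pol (i + 1)))
    (hpeps : ∀ i < n2, epsAdv P γ R (pol i) (pol (i + 1)) ≤ εR)
    (hlink : σ 0 = pol n2)
    (hσ0 : ∀ i ≤ n1, ∀ s a, 0 ≤ σ i s a)
    (hσ1 : ∀ i ≤ n1, ∀ s, ∑ a, σ i s a = 1)
    (hσabs : ∀ i < n1, ∀ s a, σ i s a = 0 → σ (i + 1) s a = 0)
    (hσKL : ∀ i < n1, avgKL P γ ρ0 (σ (i + 1)) (σ i) ≤ δ)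
    (hσA : ∀ i < n1, -(1 / t) ≤ surrAdv P γ ρ0 R (σ i) (σ (i + 1)))
    (hσeps : ∀ i < n1, epsAdv P γ R (σ i) (σ (i + 1)) ≤ εR) :
    Jret P γ ρ0 R (σ n1) - Jret P γ ρ0 R (pol 0) ≥
      - ((n1 : ℝ) / ((1 - γ) * t))
        - (Real.sqrt (2 * δ) * γ / (1 - γ) ^ 2) * ((n1 : ℝ) + (n2 : ℝ)) * εR := by
  have hP (s : S) (a : A) : P s a ∈ stdSimplex ℝ S := ⟨hP0 s a, hP1 s a⟩
  have hρ : ρ0 ∈ stdSimplex ℝ S := ⟨hρ0, hρ1⟩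
  set C := √(2 * δ) * γ / (1 - γ) ^ 2 * εR
  have hC : 0 ≤ C := by positivity
  have hmax : Jret P γ ρ0 R (σ 0) ≤ Jret P γ ρ0 R (σ n1) + n1 * (1 / ((1 - γ) * t) + C) := by
    refine le_add_mul_of_le_succ_add (f := fun i => Jret P γ ρ0 R (σ i)) fun i hi => ?_
    have hstep := Jret_add_surrAdv_sub_le (F := R) hP hρ hγ0.le hγ1
      (fun s => ⟨hσ0 i hi.le s, hσ1 i hi.le s⟩) (fun s => ⟨hσ0 (i + 1) hi s, hσ1 (i + 1) hi s⟩)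
      (hσabs i hi) (hσKL i hi) (hσeps i hi)
    have hsurr : -(1 / ((1 - γ) * t)) ≤ 1 / (1 - γ) * surrAdv P γ ρ0 R (σ i) (σ (i + 1)) := by
      rw [← one_div_mul_one_div, ← mul_neg]
      exact mul_le_mul_of_nonneg_left (hσA i hi) (one_div_nonneg.2 (by linarith))
    linarith
  have hmin : Jret P γ ρ0 R (pol 0) ≤ Jret P γ ρ0 R (σ 0) + n2 * C := by
    rw [hlink]
    cases n2 with
    | zero => simp
    | succ m =>
      have hstep := Jret_add_surrAdv_sub_le (F := R) hP hρ hγ0.le hγ1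
        (fun s => ⟨hpol0 m (by omega) s, hpol1 m (by omega) s⟩)
        (fun s => ⟨hpol0 (m + 1) le_rfl s, hpol1 (m + 1) le_rfl s⟩)
        (hpabs m (by omega)) (hpKL m (by omega)) (hpeps m (by omega))
      have hm : 0 ≤ (m : ℝ) * C := by positivity
      push_cast
      linarith [hpsurr m (by omega)]
  have hbudget : √(2 * δ) * γ / (1 - γ) ^ 2 * ((n1 : ℝ) + n2) * εR = (n1 + n2) * C := by ring
  rw [ge_iff_le, hbudget, div_eq_mul_one_div (n1 : ℝ)]
  linarith

/-- adversarial interior-point reward-budget bound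
(Proposition 5.2, reward part). -/
theorem adversarial_interior_point_reward_bound {S A : Type*} [Fintype S] [DecidableEq S] [Fintype A] [Nonempty S] [Nonempty A]
    (P : S → A → S → ℝ) (hP0 : ∀ s a s', 0 ≤ P s a s') (hP1 : ∀ s a, ∑ s', P s a s' = 1)
    (γ : ℝ) (hγ0 : 0 < γ) (hγ1 : γ < 1)
    (ρ0 : S → ℝ) (hρ0 : ∀ s, 0 ≤ ρ0 s) (hρ1 : ∑ s, ρ0 s = 1)
    (δ : ℝ) (hδ : 0 < δ) (t : ℝ) (ht : 0 < t) (εR : ℝ) (hεR : 0 ≤ εR) (R : S → A → ℝ)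
    (n1 n2 : ℕ) (pol σ : ℕ → S → A → ℝ)
    (hpol0 : ∀ i ≤ n2, ∀ s a, 0 ≤ pol i s a)
    (hpol1 : ∀ i ≤ n2, ∀ s, ∑ a, pol i s a = 1)
    (hpabs : ∀ i < n2, ∀ s a, pol i s a = 0 → pol (i + 1) s a = 0)
    (hpKL : ∀ i < n2, avgKL P γ ρ0 (pol (i + 1)) (pol i) ≤ δ)
    (hpsurr : ∀ i < n2,
      Jret P γ ρ0 R (pol 0) ≤
        Jret P γ ρ0 R (pol i) + (1 / (1 - γ)) * surrAdv P γ ρ0 R (pol i) (pol (i + 1)))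
    (hpeps : ∀ i < n2, epsAdv P γ R (pol i) (pol (i + 1)) ≤ εR)
    (hlink : σ 0 = pol n2)
    (hσ0 : ∀ i ≤ n1, ∀ s a, 0 ≤ σ i s a)
    (hσ1 : ∀ i ≤ n1, ∀ s, ∑ a, σ i s a = 1)
    (hσabs : ∀ i < n1, ∀ s a, σ i s a = 0 → σ (i + 1) s a = 0)
    (hσKL : ∀ i < n1, avgKL P γ ρ0 (σ (i + 1)) (σ i) ≤ δ)
    (hσA : ∀ i < n1, -(1 / t) ≤ surrAdv P γ ρ0 R (σ i) (σ (i + 1)))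
    (hσeps : ∀ i < n1, epsAdv P γ R (σ i) (σ (i + 1)) ≤ εR) :
    Jret P γ ρ0 R (σ n1) - Jret P γ ρ0 R (pol 0) ≥
      - ((n1 : ℝ) / ((1 - γ) * t))
        - (Real.sqrt (2 * δ) * γ / (1 - γ) ^ 2) * ((n1 : ℝ) + (n2 : ℝ)) * εR :=
  adversarial_interior_point_reward_bound_general P hP0 hP1 γ hγ0 hγ1 ρ0 hρ0 hρ1 δ t εR hεR R n1 n2
    pol σ hpol0 hpol1 hpabs hpKL hpsurr hpeps hlink hσ0 hσ1 hσabs hσKL hσA hσeps
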